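/- arXiv:nlin/0202059 — 7 statements merged into one kernel-verified Lean document; each statement's English description precedes it below -/
import Mathlib

section
/- For the two-pulson system, the quantity H = p₁ p₂ (1 − g(q₁−q₂))^{b−1} is a conserved quantity: dH/dt = 0, provided g(q₁(t)−q₂(t)) ≠ 1 along the solution (so the power is well defined). -/
/-!
Along the flow, `u = q₁ - q₂` satisfies `u̇ = (p₁ - p₂)(1 - g u)` because `g` is even, and
`g'` is odd, so `p₂` moves opposite to `p₁`. With `k = g'(u)(p₁ - p₂)` one gets
`(p₁p₂)˙ = (b - 1) k p₁p₂` and `(1 - g u)˙ = -k (1 - g u)`: the logarithmic derivatives of the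
two factors of `H` cancel.
-/

theorem Function.Even.deriv_odd {𝕜 F : Type*} [NontriviallyNormedField 𝕜] [NormedAddCommGroup F]
    [NormedSpace 𝕜 F] {f : 𝕜 → F} (hf : f.Even) : (deriv f).Odd := fun x => by
  have h := deriv_comp_neg f (-x)
  rw [funext hf, neg_neg] at h
  exact h

theorem HasDerivAt.mul_rpow_const_eq_zero {P F : ℝ → ℝ} {c k t : ℝ}
    (hP : HasDerivAt P (c * k * P t) t) (hF : HasDerivAt F (-k * F t) t) (hFt : F t ≠ 0) :
    HasDerivAt (fun s => P s * F s ^ c) 0 t := by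
  refine (hP.mul (hF.rpow_const (Or.inl hFt))).congr_deriv ?_
  rw [Real.rpow_sub_one hFt]
  field_simp
  ring

section TwoPulson

variable {g : ℝ → ℝ} {b : ℝ} {p₁ p₂ q₁ q₂ : ℝ → ℝ}

theorem hasDerivAt_sub_of_two_pulson (hgeven : g.Even)
    (hq₁ : ∀ t, HasDerivAt q₁ (p₁ t + p₂ t * g (q₁ t - q₂ t)) t)
    (hq₂ : ∀ t, HasDerivAt q₂ (p₂ t + p₁ t * g (q₂ t - q₁ t)) t) (t : ℝ) :
    HasDerivAt (fun s => q₁ s - q₂ s) ((p₁ t - p₂ t) * (1 - g (q₁ t - q₂ t))) t := by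
  have hsymm : g (q₂ t - q₁ t) = g (q₁ t - q₂ t) := by rw [← neg_sub, hgeven]
  refine ((hq₁ t).sub (hq₂ t)).congr_deriv ?_
  rw [hsymm]
  ring

theorem hasDerivAt_mul_of_two_pulson (hgeven : g.Even)
    (hp₁ : ∀ t, HasDerivAt p₁ ((1 - b) * p₁ t * p₂ t * deriv g (q₁ t - q₂ t)) t)
    (hp₂ : ∀ t, HasDerivAt p₂ ((1 - b) * p₁ t * p₂ t * deriv g (q₂ t - q₁ t)) t) (t : ℝ) :
    HasDerivAt (fun s => p₁ s * p₂ s)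
      ((b - 1) * (deriv g (q₁ t - q₂ t) * (p₁ t - p₂ t)) * (p₁ t * p₂ t)) t := by
  have hodd : deriv g (q₂ t - q₁ t) = -deriv g (q₁ t - q₂ t) := by
    rw [← neg_sub, hgeven.deriv_odd]
  refine ((hp₁ t).mul (hp₂ t)).congr_deriv ?_
  rw [hodd]
  ring

end TwoPulson

/-- Conservation of `H = p₁ p₂ (1 - g(q₁-q₂))^(b-1)` for the two-pulson system,
provided `1 - g(q₁-q₂) > 0` along the solution. -/
theorem two_pulson_H_conserved
    (g : ℝ → ℝ) (b : ℝ)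
    (hg : Differentiable ℝ g)
    (hgeven : ∀ x, g (-x) = g x)
    (p₁ p₂ q₁ q₂ : ℝ → ℝ)
    (hp₁ : ∀ t, HasDerivAt p₁ ((1 - b) * p₁ t * p₂ t * deriv g (q₁ t - q₂ t)) t)
    (hp₂ : ∀ t, HasDerivAt p₂ ((1 - b) * p₁ t * p₂ t * deriv g (q₂ t - q₁ t)) t)
    (hq₁ : ∀ t, HasDerivAt q₁ (p₁ t + p₂ t * g (q₁ t - q₂ t)) t)
    (hq₂ : ∀ t, HasDerivAt q₂ (p₂ t + p₁ t * g (q₂ t - q₁ t)) t)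
    (hpos : ∀ t, 0 < 1 - g (q₁ t - q₂ t)) :
    ∀ t, HasDerivAt
      (fun s => p₁ s * p₂ s * (1 - g (q₁ s - q₂ s)) ^ (b - 1)) 0 t := by
  intro t
  have hgu := (hg _).hasDerivAt.comp t (hasDerivAt_sub_of_two_pulson hgeven hq₁ hq₂ t)
  have hF : HasDerivAt (fun s => 1 - g (q₁ s - q₂ s))
      (-(deriv g (q₁ t - q₂ t) * (p₁ t - p₂ t)) * (1 - g (q₁ t - q₂ t))) t :=
    (hgu.const_sub 1).congr_deriv (by ring)
  exact (hasDerivAt_mul_of_two_pulson hgeven hp₁ hp₂ t).mul_rpow_const_eq_zero hF (hpos t).ne'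
end

section
/- In sum-and-difference variables P = p₁+p₂, p = p₁−p₂, q = q₁−q₂, the two-pulson equations imply (dq/dt)² = P²(1−g(q))² − 4H(1−g(q))^{3−b}, where H = (1/4)(P²−p²)(1−g(q))^{b−1}. -/
/-- In sum-and-difference variables `P = p₁+p₂`, `p = p₁-p₂`, `q = q₁-q₂`, the
two-pulson equations imply `(dq/dt)² = P²(1-g(q))² - 4H(1-g(q))^(3-b)` with
`H = (1/4)(P²-p²)(1-g(q))^(b-1)`. -/
theorem two_pulson_quadrature
    (g : ℝ → ℝ) (b : ℝ)
    (hg : Differentiable ℝ g)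
    (hgeven : ∀ x, g (-x) = g x)
    (hg0 : g 0 = 1)
    (p₁ p₂ q₁ q₂ : ℝ → ℝ)
    (hp₁ : ∀ t, HasDerivAt p₁
      ((1 - b) * p₁ t * (p₁ t * deriv g 0 + p₂ t * deriv g (q₁ t - q₂ t))) t)
    (hp₂ : ∀ t, HasDerivAt p₂
      ((1 - b) * p₂ t * (p₂ t * deriv g 0 + p₁ t * deriv g (q₂ t - q₁ t))) t)
    (hq₁ : ∀ t, HasDerivAt q₁ (p₁ t * g 0 + p₂ t * g (q₁ t - q₂ t)) t)
    (hq₂ : ∀ t, HasDerivAt q₂ (p₂ t * g 0 + p₁ t * g (q₂ t - q₁ t)) t)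
    (hpos : ∀ t, 0 < 1 - g (q₁ t - q₂ t)) :
    ∀ t, (deriv (fun s => q₁ s - q₂ s) t) ^ 2
      = (p₁ t + p₂ t) ^ 2 * (1 - g (q₁ t - q₂ t)) ^ 2
        - 4 * ((1/4) * ((p₁ t + p₂ t) ^ 2 - (p₁ t - p₂ t) ^ 2)
              * (1 - g (q₁ t - q₂ t)) ^ (b - 1))
          * (1 - g (q₁ t - q₂ t)) ^ ((3 : ℝ) - b) := by
  intro t
  have hq : HasDerivAt (fun s => q₁ s - q₂ s)
      ((p₁ t * g 0 + p₂ t * g (q₁ t - q₂ t)) - (p₂ t * g 0 + p₁ t * g (q₂ t - q₁ t))) t :=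
    (hq₁ t).sub (hq₂ t)
  have hd : deriv (fun s => q₁ s - q₂ s) t = (p₁ t - p₂ t) * (1 - g (q₁ t - q₂ t)) := by
    rw [hq.deriv]
    have : g (q₂ t - q₁ t) = g (q₁ t - q₂ t) := by
      rw [← hgeven (q₁ t - q₂ t)]; ring_nf
    rw [this, hg0]; ring
  have hx : (0:ℝ) < 1 - g (q₁ t - q₂ t) := hpos t
  have hpow : (1 - g (q₁ t - q₂ t)) ^ (b - 1) * (1 - g (q₁ t - q₂ t)) ^ ((3:ℝ) - b)
      = (1 - g (q₁ t - q₂ t)) ^ 2 := by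
    rw [← Real.rpow_add hx]
    norm_num
  rw [hd]
  nlinarith [hpow]
end

section
/- Preservation of pulson order: suppose b > 1, g is continuous with g(0) = 1 and g(x) < 1 for x ≠ 0, and along a two-pulson trajectory p² = (c₁+c₂)² − 4c₁c₂/(1−g(q))^{b−1} holds with c₁c₂ > 0. Then q(t) ≠ 0 for all t: i.e., the separation can never vanish. -/
/-! Since `p² ≥ 0`, the energy identity bounds `(1 - g(q))^(1-b)` above, i.e. keeps `1 - g(q)`
at least some fixed `ε > 0` wherever `q ≠ 0`. As `1 - g(q)` is continuous and vanishes where `q`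
does, the set `{q ≠ 0} = {ε ≤ 1 - g(q)}` is closed as well as open, so `{q < 0}` is clopen in `ℝ`
and, containing `0`, is everything. -/

open Set

theorem Real.div_rpow_inv_le_of_mul_rpow_neg_le {c e K u : ℝ} (hc : 0 < c) (he : 0 < e)
    (hu : 0 < u) (h : c * u ^ (-e) ≤ K) : (c / K) ^ e⁻¹ ≤ u := by
  have hue : 0 < u ^ e := Real.rpow_pos_of_pos hu e
  rw [Real.rpow_neg hu.le, ← div_eq_mul_inv, div_le_iff₀ hue] at h
  have hK : 0 < K := pos_of_mul_pos_left (hc.trans_le h) hue.le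
  rw [Real.rpow_inv_le_iff_of_pos (div_pos hc hK).le hu.le he, div_le_iff₀ hK, mul_comm]
  exact h

section SignPreservation

variable {X : Type*} [TopologicalSpace X] {q φ : X → ℝ}

theorem isClosed_setOf_ne_zero_of_gap {ε : ℝ} (hφ : Continuous φ)
    (hgap : ∀ t, q t ≠ 0 → ε ≤ φ t) (hzero : ∀ t, q t = 0 → φ t < ε) :
    IsClosed {t | q t ≠ 0} := by
  have hset : {t | q t ≠ 0} = {t | ε ≤ φ t} :=
    ext fun t => ⟨hgap t, fun h h0 => (hzero t h0).not_ge h⟩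
  rw [hset]
  exact isClosed_le continuous_const hφ

theorem neg_of_isClosed_setOf_ne_zero [PreconnectedSpace X] (hq : Continuous q)
    (hclosed : IsClosed {t | q t ≠ 0}) {t₀ : X} (h₀ : q t₀ < 0) (t : X) : q t < 0 := by
  have hclopen : IsClopen {t | q t < 0} := by
    refine ⟨?_, isOpen_lt hq continuous_const⟩
    have hset : {t | q t < 0} = {t | q t ≤ 0} ∩ {t | q t ≠ 0} :=
      ext fun t => show q t < 0 ↔ q t ≤ 0 ∧ q t ≠ 0 from lt_iff_le_and_ne
    rw [hset]
    exact (isClosed_le hq continuous_const).inter hclosed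
  have ht : t ∈ {t | q t < 0} := hclopen.eq_univ ⟨t₀, h₀⟩ ▸ mem_univ t
  exact ht

end SignPreservation

theorem pulson_order_preserved_general
    (g : ℝ → ℝ) (b c₁ c₂ : ℝ)
    (hb : 1 < b)
    (hgcont : Continuous g)
    (hg0 : g 0 = 1)
    (hglt : ∀ x ≠ (0 : ℝ), g x < 1)
    (hc : 0 < c₁ * c₂)
    (p q : ℝ → ℝ)
    (hqcont : Continuous q)
    (hq0 : q 0 < 0)
    (hid : ∀ t, q t ≠ 0 →
      (p t) ^ 2 = (c₁ + c₂) ^ 2 - 4 * c₁ * c₂ * (1 - g (q t)) ^ ((1 : ℝ) - b)) :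
    ∀ t, q t < 0 := by
  set ε := (4 * c₁ * c₂ / (c₁ + c₂) ^ 2) ^ (b - 1)⁻¹
  have hK : 0 < (c₁ + c₂) ^ 2 := by nlinarith [sq_nonneg (c₁ - c₂)]
  have hε : 0 < ε := Real.rpow_pos_of_pos (div_pos (by linarith) hK) _
  have hgap : ∀ t, q t ≠ 0 → ε ≤ 1 - g (q t) := fun t ht =>
    Real.div_rpow_inv_le_of_mul_rpow_neg_le (by linarith) (sub_pos.2 hb)
      (sub_pos.2 (hglt _ ht)) (by rw [neg_sub]; nlinarith [hid t ht, sq_nonneg (p t)])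
  have hzero : ∀ t, q t = 0 → 1 - g (q t) < ε := fun t ht => by
    rw [ht, hg0, sub_self]
    exact hε
  exact neg_of_isClosed_setOf_ne_zero hqcont
    (isClosed_setOf_ne_zero_of_gap (by fun_prop) hgap hzero) hq0

/-- Preservation of pulson order: for `b > 1`, `g` continuous with `g 0 = 1` and
`g x < 1` off zero, along a two-pulson trajectory satisfying
`p² = (c₁+c₂)² - 4c₁c₂ (1-g(q))^(1-b)` wherever `q ≠ 0`, with `c₁c₂ > 0` and
`q 0 < 0`, the separation never vanishes: `q t < 0` for all `t`. -/
theorem pulson_order_preserved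
    (g : ℝ → ℝ) (b c₁ c₂ : ℝ)
    (hb : 1 < b)
    (hgcont : Continuous g)
    (hg0 : g 0 = 1)
    (hglt : ∀ x ≠ (0 : ℝ), g x < 1)
    (hc : 0 < c₁ * c₂)
    (p q : ℝ → ℝ)
    (hpcont : Continuous p)
    (hqcont : Continuous q)
    (hq0 : q 0 < 0)
    (hid : ∀ t, q t ≠ 0 →
      (p t) ^ 2 = (c₁ + c₂) ^ 2 - 4 * c₁ * c₂ * (1 - g (q t)) ^ ((1 : ℝ) - b)) :
    ∀ t, q t < 0 :=
  pulson_order_preserved_general g b c₁ c₂ hb hgcont hg0 hglt hc p q hqcont hq0 hid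
end

section
/- Blow-up comparison for the slope ODE: let b > 1 and M > 0, and suppose s : [0,T) → ℝ is differentiable with ds/dt ≤ −((b−1)/2) s² + M/2 and s(0) ≤ −√(M/(b−1))·κ for some κ > 1. Then s cannot exist (remain finite) for all t ≥ 0; in fact s(t) → −∞ by the finite time t* = (2/√(M(b−1))) arcoth(κ). -/
/-!
Write the inequality as `s' ≤ a (l² - s²)` with `a = (b - 1)/2` and `l = √(M/(b - 1))`. Since the
right-hand side is negative at `s 0 < -l`, the solution never climbs back to `s 0`, so it stays
below `-l`. There `t ↦ arcoth (-s t / l) + a l t` is antitone, and as `arcoth > 0` on `(1, ∞)`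
this forces `a l t < arcoth (-s 0 / l) ≤ arcoth κ` for every `t < T`; finally `a l = √(M(b-1))/2`.
-/

open Set

noncomputable def arcoth (x : ℝ) : ℝ := 1 / 2 * Real.log ((x + 1) / (x - 1))

theorem hasDerivAt_arcoth {x : ℝ} (h₁ : x ≠ 1) (h₂ : x ≠ -1) :
    HasDerivAt arcoth (1 / (1 - x ^ 2)) x := by
  have hp : x + 1 ≠ 0 := fun h => h₂ (by linarith)
  have hm : x - 1 ≠ 0 := sub_ne_zero.2 h₁
  have hq := ((hasDerivAt_id' x).add_const 1).div ((hasDerivAt_id' x).sub_const 1) hm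
  refine ((hq.log (div_ne_zero hp hm)).const_mul (1 / 2)).congr_deriv ?_
  have hsq : 1 - x ^ 2 ≠ 0 := by
    rw [show 1 - x ^ 2 = -((x + 1) * (x - 1)) by ring]
    exact neg_ne_zero.2 (mul_ne_zero hp hm)
  simp only [Pi.div_apply]
  field_simp
  ring

theorem arcoth_pos {x : ℝ} (hx : 1 < x) : 0 < arcoth x := by
  have : 1 < (x + 1) / (x - 1) := by rw [one_lt_div (by linarith)]; linarith
  unfold arcoth
  have := Real.log_pos this
  positivity

theorem arcoth_le_arcoth {x y : ℝ} (hx : 1 < x) (hxy : x ≤ y) : arcoth y ≤ arcoth x := by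
  unfold arcoth
  gcongr 1 / 2 * ?_
  refine Real.log_le_log (div_pos (by linarith) (by linarith)) ?_
  rw [div_le_div_iff₀ (by linarith) (by linarith)]
  linarith

theorem le_initial_of_deriv_le {f F : ℝ → ℝ} {a T : ℝ}
    (hf : ∀ t ∈ Ico a T, DifferentiableAt ℝ f t)
    (hF : ∀ t ∈ Ico a T, deriv f t ≤ F (f t)) (hFa : F (f a) < 0) :
    ∀ t ∈ Ico a T, f t ≤ f a := by
  intro t ht
  have hIcc : Icc a t ⊆ Ico a T := Icc_subset_Ico_right ht.2
  have hIco : Ico a t ⊆ Ico a T := Ico_subset_Ico_right ht.2.le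
  refine image_le_of_deriv_right_lt_deriv_boundary (B := fun _ => f a) (B' := fun _ => 0)
    (fun x hx => (hf x (hIcc hx)).continuousAt.continuousWithinAt)
    (fun x hx => (hf x (hIco hx)).hasDerivAt.hasDerivWithinAt) le_rfl
    (fun x => hasDerivAt_const x (f a)) (fun x hx hfx => ?_) ⟨ht.1, le_rfl⟩
  have := hF x (hIco hx)
  rw [hfx] at this
  exact this.trans_lt hFa

section Riccati

variable {a l T : ℝ} {s : ℝ → ℝ}

theorem riccati_lt_neg (ha : 0 < a) (hl : 0 < l) (hs : ∀ t ∈ Ico 0 T, DifferentiableAt ℝ s t)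
    (hineq : ∀ t ∈ Ico 0 T, deriv s t ≤ a * (l ^ 2 - s t ^ 2)) (hs0 : s 0 < -l) :
    ∀ t ∈ Ico 0 T, s t < -l := by
  refine fun t ht =>
    (le_initial_of_deriv_le (F := fun x => a * (l ^ 2 - x ^ 2)) hs hineq ?_ t ht).trans_lt hs0
  exact mul_neg_of_pos_of_neg ha (by nlinarith)

/-- With `u = -s / l > 1` the inequality reads `u' ≥ a l (u² - 1)`, and `arcoth' = 1 / (1 - u²)`. -/
theorem riccati_arcoth_add_antitoneOn (ha : 0 < a) (hl : 0 < l)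
    (hs : ∀ t ∈ Ico 0 T, DifferentiableAt ℝ s t)
    (hineq : ∀ t ∈ Ico 0 T, deriv s t ≤ a * (l ^ 2 - s t ^ 2)) (hs0 : s 0 < -l) :
    AntitoneOn (fun t => arcoth (-s t / l) + a * l * t) (Ico 0 T) := by
  have hu : ∀ t ∈ Ico 0 T, 1 < -s t / l := fun t ht =>
    (lt_div_iff₀ hl).2 (by linarith [riccati_lt_neg ha hl hs hineq hs0 t ht])
  have hderiv : ∀ t ∈ Ico 0 T, HasDerivAt (fun t => arcoth (-s t / l) + a * l * t)
      (1 / (1 - (-s t / l) ^ 2) * (-deriv s t / l) + a * l) t := fun t ht =>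
    ((hasDerivAt_arcoth (hu t ht).ne' (by linarith [hu t ht])).comp t
      ((hs t ht).hasDerivAt.neg.div_const l)).add
      (by simpa using (hasDerivAt_id' t).const_mul (a * l))
  refine antitoneOn_of_hasDerivWithinAt_nonpos (convex_Ico 0 T)
    (fun t ht => (hderiv t ht).continuousAt.continuousWithinAt)
    (fun t ht => (hderiv t (interior_subset ht)).hasDerivWithinAt) fun t ht => ?_
  replace ht := interior_subset ht
  set u := -s t / l
  have hul : u * l = -s t := div_mul_cancel₀ _ hl.ne'
  have hgrowth : a * l * (u ^ 2 - 1) ≤ -deriv s t / l := by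
    rw [le_div_iff₀ hl]
    calc a * l * (u ^ 2 - 1) * l = a * ((u * l) ^ 2 - l ^ 2) := by ring
      _ = a * (s t ^ 2 - l ^ 2) := by rw [hul]; ring
      _ ≤ -deriv s t := by linarith [hineq t ht]
  have hneg : 1 - u ^ 2 < 0 := by nlinarith [hu t ht]
  have hcancel : 1 / (1 - u ^ 2) * (a * l * (u ^ 2 - 1)) = -(a * l) := by
    field_simp [hneg.ne]
    ring
  linarith [mul_le_mul_of_nonpos_left hgrowth (one_div_neg.2 hneg).le]

theorem riccati_blowup_time_le (ha : 0 < a) (hl : 0 < l)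
    (hs : ∀ t ∈ Ico 0 T, DifferentiableAt ℝ s t)
    (hineq : ∀ t ∈ Ico 0 T, deriv s t ≤ a * (l ^ 2 - s t ^ 2)) (hs0 : s 0 < -l) :
    T ≤ arcoth (-s 0 / l) / (a * l) := by
  by_contra! hT
  set C := arcoth (-s 0 / l) / (a * l)
  have hC : 0 < C := div_pos (arcoth_pos ((lt_div_iff₀ hl).2 (by linarith))) (by positivity)
  have hCT : C ∈ Ico 0 T := ⟨hC.le, hT⟩
  have hsC := riccati_lt_neg ha hl hs hineq hs0 C hCT
  have hdecay :=
    riccati_arcoth_add_antitoneOn ha hl hs hineq hs0 ⟨le_rfl, hC.trans hT⟩ hCT hC.le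
  have hlC : a * l * C = arcoth (-s 0 / l) := mul_div_cancel₀ _ (by positivity)
  have := arcoth_pos ((lt_div_iff₀ hl).2 (by linarith) : 1 < -s C / l)
  simp only [mul_zero, add_zero] at hdecay
  linarith

end Riccati

/-- Blow-up comparison for the slope ODE: if `b > 1`, `M > 0`, `s` is differentiable
on `[0,T)` with `s' ≤ -((b-1)/2)s² + M/2` and `s 0 ≤ -√(M/(b-1))·κ` with `κ > 1`,
then `T ≤ (2/√(M(b-1))) arcoth κ`, where `arcoth κ = (1/2) ln((κ+1)/(κ-1))`. -/
theorem slope_blow_up (b M κ T : ℝ) (hb : 1 < b) (hM : 0 < M) (hκ : 1 < κ)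
    (s : ℝ → ℝ)
    (hdiff : ∀ t ∈ Set.Ico (0 : ℝ) T, DifferentiableAt ℝ s t)
    (hineq : ∀ t ∈ Set.Ico (0 : ℝ) T,
      deriv s t ≤ -((b - 1) / 2) * (s t) ^ 2 + M / 2)
    (hs0 : s 0 ≤ -(Real.sqrt (M / (b - 1)) * κ)) :
    T ≤ 2 / Real.sqrt (M * (b - 1)) * ((1 / 2) * Real.log ((κ + 1) / (κ - 1))) := by
  have hb1 : 0 < b - 1 := by linarith
  set l := Real.sqrt (M / (b - 1))
  have hl : 0 < l := Real.sqrt_pos.2 (div_pos hM hb1)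
  have hl2 : l ^ 2 = M / (b - 1) := Real.sq_sqrt (div_pos hM hb1).le
  have hrate : Real.sqrt (M * (b - 1)) = 2 * ((b - 1) / 2 * l) := by
    rw [show M * (b - 1) = ((b - 1) * l) ^ 2 by rw [mul_pow, hl2]; field_simp]
    rw [Real.sqrt_sq (by positivity)]
    ring
  have hMl : (b - 1) / 2 * l ^ 2 = M / 2 := by rw [hl2]; field_simp
  have hriccati : ∀ t ∈ Ico 0 T, deriv s t ≤ (b - 1) / 2 * (l ^ 2 - s t ^ 2) := fun t ht => by
    linarith [hineq t ht]
  have hκs : κ ≤ -s 0 / l := by rw [le_div_iff₀ hl]; linarith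
  calc T ≤ arcoth (-s 0 / l) / ((b - 1) / 2 * l) :=
        riccati_blowup_time_le (by positivity) hl hdiff hriccati (by nlinarith)
    _ ≤ arcoth κ / ((b - 1) / 2 * l) := by gcongr; exact arcoth_le_arcoth hκ hκs
    _ = _ := by rw [hrate, arcoth]; field_simp
end

section
/- Conservation of the H¹_α norm for the inviscid Burgers-αβ equation when (3−b)β = 1: if u(x,t) is a smooth solution, decaying with its derivatives at spatial infinity, of u_t + u u_x = −β τ_x with (1−α²∂ₓ²)τ = (b/2)u² + ((3−b)/2)α² u_x², and (3−b)β = 1, then d/dt ∫ (u² + α² u_x²) dx = 0. -/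
open MeasureTheory Filter Topology

lemma schwartz_mul_int (f : SchwartzMap ℝ ℝ) {φ : ℝ → ℝ} (hφ : Integrable φ) :
    Integrable (fun x => f x * φ x) :=
  hφ.bdd_mul f.continuous.aestronglyMeasurable (Filter.Eventually.of_forall fun x => f.norm_le_seminorm ℝ x)

lemma schwartz_tendsto_top (f : SchwartzMap ℝ ℝ) : Tendsto f atTop (𝓝 0) := by
  have := f.toZeroAtInfty.zero_at_infty'
  rw [cocompact_eq_atBot_atTop] at this
  exact this.mono_left le_sup_right

lemma schwartz_tendsto_bot (f : SchwartzMap ℝ ℝ) : Tendsto f atBot (𝓝 0) := by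
  have := f.toZeroAtInfty.zero_at_infty'
  rw [cocompact_eq_atBot_atTop] at this
  exact this.mono_left le_sup_left

lemma clairaut {u : ℝ → ℝ → ℝ} (hu : ContDiff ℝ (⊤ : ℕ∞) (Function.uncurry u)) (t x : ℝ) :
    deriv (fun s => deriv (u s) x) t = deriv (fun y => deriv (fun s => u s y) t) x := by
  set U := Function.uncurry u with hU
  set Φ := fderiv ℝ U with hΦdef
  have hΦ : ContDiff ℝ (⊤ : ℕ∞) Φ := hu.fderiv_right (by simp)
  have hdiff : ∀ p, HasFDerivAt U (Φ p) p := fun p =>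
    (hu.differentiable (by simp) p).hasFDerivAt
  have A1 : ∀ s y, HasDerivAt (u s) (Φ (s, y) (0, 1)) y := by
    intro s y
    have h1 : HasDerivAt (fun z : ℝ => ((s, z) : ℝ × ℝ)) ((0 : ℝ), (1 : ℝ)) y :=
      HasDerivAt.prodMk (hasDerivAt_const y s) (hasDerivAt_id y)
    exact (hdiff (s, y)).comp_hasDerivAt y h1
  have A2 : ∀ s y, HasDerivAt (fun z => u z y) (Φ (s, y) (1, 0)) s := by
    intro s y
    have h1 : HasDerivAt (fun z : ℝ => ((z, y) : ℝ × ℝ)) ((1 : ℝ), (0 : ℝ)) s :=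
      HasDerivAt.prodMk (hasDerivAt_id s) (hasDerivAt_const s y)
    exact (hdiff (s, y)).comp_hasDerivAt s h1
  have hΦd : HasFDerivAt Φ (fderiv ℝ Φ (t, x)) (t, x) :=
    (hΦ.differentiable (by simp) (t, x)).hasFDerivAt
  have B : HasDerivAt (fun s => Φ (s, x) (0, 1)) (fderiv ℝ Φ (t, x) (1, 0) (0, 1)) t := by
    have h1 : HasDerivAt (fun s : ℝ => ((s, x) : ℝ × ℝ)) ((1 : ℝ), (0 : ℝ)) t :=
      HasDerivAt.prodMk (hasDerivAt_id t) (hasDerivAt_const t x)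
    have h2 : HasDerivAt (fun s : ℝ => Φ (s, x)) (fderiv ℝ Φ (t, x) (1, 0)) t :=
      hΦd.comp_hasDerivAt t h1
    exact (ContinuousLinearMap.apply ℝ ℝ ((0 : ℝ), (1 : ℝ))).hasFDerivAt.comp_hasDerivAt t h2
  have C : HasDerivAt (fun y => Φ (t, y) (1, 0)) (fderiv ℝ Φ (t, x) (0, 1) (1, 0)) x := by
    have h1 : HasDerivAt (fun y : ℝ => ((t, y) : ℝ × ℝ)) ((0 : ℝ), (1 : ℝ)) x :=
      HasDerivAt.prodMk (hasDerivAt_const x t) (hasDerivAt_id x)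
    have h2 : HasDerivAt (fun y : ℝ => Φ (t, y)) (fderiv ℝ Φ (t, x) (0, 1)) x :=
      hΦd.comp_hasDerivAt x h1
    exact (ContinuousLinearMap.apply ℝ ℝ ((1 : ℝ), (0 : ℝ))).hasFDerivAt.comp_hasDerivAt x h2
  have hsym := second_derivative_symmetric (fun p => hdiff p) hΦd
    ((1 : ℝ), (0 : ℝ)) ((0 : ℝ), (1 : ℝ))
  have e1 : (fun s => deriv (u s) x) = fun s => Φ (s, x) (0, 1) :=
    funext fun s => (A1 s x).deriv
  have e2 : (fun y => deriv (fun s => u s y) t) = fun y => Φ (t, y) (1, 0) :=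
    funext fun y => (A2 t y).deriv
  rw [e1, e2, B.deriv, C.deriv, hsym]

/-- Conservation of the `H¹_α` norm for the inviscid Burgers-αβ equation when
`(3-b)β = 1`: for a smooth, Schwartz-class (in `x`) solution of
`u_t + u u_x = -β τ_x`, `(1-α²∂ₓ²)τ = (b/2)u² + ((3-b)/2)α²u_x²`, the quantity
`∫ (u² + α² u_x²) dx` is conserved in time. -/
theorem burgers_alpha_beta_H1_conserved
    (α b β : ℝ) (hα : 0 < α) (hbβ : (3 - b) * β = 1)
    (u τ : ℝ → ℝ → ℝ)
    (hu : ContDiff ℝ (⊤ : ℕ∞) (Function.uncurry u))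
    (hτ : ContDiff ℝ (⊤ : ℕ∞) (Function.uncurry τ))
    (hu_decay : ∀ t : ℝ, ∃ f : SchwartzMap ℝ ℝ, ∀ x, f x = u t x)
    (hux_decay : ∀ t : ℝ, ∃ f : SchwartzMap ℝ ℝ, ∀ x, f x = deriv (u t) x)
    (hτ_decay : ∀ t : ℝ, ∃ f : SchwartzMap ℝ ℝ, ∀ x, f x = τ t x)
    (hpde : ∀ t x, deriv (fun s => u s x) t + u t x * deriv (u t) x
      + β * deriv (τ t) x = 0)
    (hhelm : ∀ t x, τ t x - α ^ 2 * iteratedDeriv 2 (τ t) x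
      = (b / 2) * (u t x) ^ 2 + ((3 - b) / 2) * α ^ 2 * (deriv (u t) x) ^ 2)
    (hswap : ∀ t, HasDerivAt
      (fun s => ∫ x : ℝ, ((u s x) ^ 2 + α ^ 2 * (deriv (u s) x) ^ 2))
      (∫ x : ℝ, (2 * u t x * deriv (fun s => u s x) t
        + 2 * α ^ 2 * deriv (u t) x * deriv (fun s => deriv (u s) x) t)) t) :
    ∀ t, HasDerivAt
      (fun s => ∫ x : ℝ, ((u s x) ^ 2 + α ^ 2 * (deriv (u s) x) ^ 2)) 0 t := by
  intro t
  obtain ⟨f, hf⟩ := hu_decay t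
  obtain ⟨g, hg⟩ := hux_decay t
  obtain ⟨h, hh⟩ := hτ_decay t
  have hfu : ⇑f = u t := funext hf
  have hgu : ⇑g = deriv (u t) := funext hg
  have hhτ : ⇑h = τ t := funext hh
  -- basic derivative facts
  have hut : ContDiff ℝ (⊤ : ℕ∞) (u t) := hu.comp (contDiff_const.prodMk contDiff_id)
  have hfd : ∀ y, HasDerivAt f (g y) y := by
    intro y
    have := ((hut.differentiable (by simp)) y).hasDerivAt
    rw [← hgu] at this
    rwa [hfu]
  have hgd : ∀ y, HasDerivAt g (deriv g y) y := fun y => g.differentiableAt.hasDerivAt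
  have hhd : ∀ y, HasDerivAt h (deriv h y) y := fun y => h.differentiableAt.hasDerivAt
  have hdh : Differentiable ℝ (deriv h) :=
    ((contDiff_infty_iff_deriv.mp (h.smooth ⊤)).2).differentiable (by simp)
  have hhd' : ∀ y, HasDerivAt (fun z => deriv h z) (deriv (deriv h) y) y := fun y =>
    (hdh y).hasDerivAt
  -- time derivative from the PDE
  have e1 : ∀ y, deriv (fun s => u s y) t = -(f y * g y + β * deriv h y) := by
    intro y
    have hp := hpde t y
    have : deriv (τ t) y = deriv h y := by rw [hhτ]
    rw [← hf y, ← hg y, this] at hp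
    linarith
  -- spatial derivative of the time derivative, via Clairaut
  have hW : ∀ y, HasDerivAt (fun z => -(f z * g z + β * deriv h z))
      (-(g y * g y + f y * deriv g y + β * deriv (deriv h) y)) y := by
    intro y
    exact (((hfd y).mul (hgd y)).add ((hhd' y).const_mul β)).neg
  have e2 : ∀ y, deriv (fun s => deriv (u s) y) t
      = -(g y * g y + f y * deriv g y + β * deriv (deriv h) y) := by
    intro y
    rw [clairaut hu t y,
      show (fun z => deriv (fun s => u s z) t) = fun z => -(f z * g z + β * deriv h z) from
        funext fun z => e1 z,
      (hW y).deriv]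
  -- Helmholtz identity in terms of the Schwartz representatives
  have hH : ∀ y, h y - α ^ 2 * deriv (deriv h) y
      = b / 2 * f y ^ 2 + (3 - b) / 2 * α ^ 2 * g y ^ 2 := by
    intro y
    have := hhelm t y
    rw [← hf y, ← hg y, ← hhτ] at this
    rwa [show iteratedDeriv 2 (⇑h) = deriv (deriv (⇑h)) by
      simp [iteratedDeriv_succ, iteratedDeriv_zero]] at this
  -- the conserved-density flux F
  set F : ℝ → ℝ := fun y =>
    -α ^ 2 * (f y * g y ^ 2) - (2 - b * β) / 3 * f y ^ 3 - 2 * β * (f y * h y) with hFdef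
  have hFd : ∀ x, HasDerivAt F
      (2 * u t x * deriv (fun s => u s x) t
        + 2 * α ^ 2 * deriv (u t) x * deriv (fun s => deriv (u s) x) t) x := by
    intro x
    have t1 : HasDerivAt (fun y => -α ^ 2 * (f y * g y ^ 2))
        (-α ^ 2 * (g x * g x ^ 2 + f x * (2 * g x ^ 1 * deriv g x))) x :=
      (((hfd x).mul ((hgd x).pow 2))).const_mul _
    have t2 : HasDerivAt (fun y => (2 - b * β) / 3 * f y ^ 3)
        ((2 - b * β) / 3 * (3 * f x ^ 2 * g x)) x := ((hfd x).pow 3).const_mul _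
    have t3 : HasDerivAt (fun y => 2 * β * (f y * h y))
        (2 * β * (g x * h x + f x * deriv h x)) x := ((hfd x).mul (hhd x)).const_mul _
    have hcomb := (t1.sub t2).sub t3
    have hval : 2 * u t x * deriv (fun s => u s x) t
        + 2 * α ^ 2 * deriv (u t) x * deriv (fun s => deriv (u s) x) t
        = -α ^ 2 * (g x * g x ^ 2 + f x * (2 * g x ^ 1 * deriv g x))
          - (2 - b * β) / 3 * (3 * f x ^ 2 * g x)
          - 2 * β * (g x * h x + f x * deriv h x) := by
      rw [e1 x, e2 x, ← hf x, ← hg x]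
      linear_combination (2 * β * g x) * hH x + (α ^ 2 * g x ^ 3) * hbβ
    rw [hval]
    exact hcomb
  -- integrability of the integrand
  set g₁ := SchwartzMap.derivCLM ℝ ℝ g with hg₁
  set h₁ := SchwartzMap.derivCLM ℝ ℝ h with hh₁
  set h₂ := SchwartzMap.derivCLM ℝ ℝ h₁ with hh₂
  have hg₁e : ⇑g₁ = deriv g := funext fun y => SchwartzMap.derivCLM_apply ℝ g y
  have hh₁e : ⇑h₁ = deriv h := funext fun y => SchwartzMap.derivCLM_apply ℝ h y
  have hh₂e : ⇑h₂ = deriv (deriv h) := by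
    rw [hh₂]
    refine funext fun y => ?_
    rw [SchwartzMap.derivCLM_apply, hh₁e]
  have hint : Integrable (fun x =>
      2 * u t x * deriv (fun s => u s x) t
        + 2 * α ^ 2 * deriv (u t) x * deriv (fun s => deriv (u s) x) t) := by
    have heq : (fun x =>
        2 * u t x * deriv (fun s => u s x) t
          + 2 * α ^ 2 * deriv (u t) x * deriv (fun s => deriv (u s) x) t)
        = fun x => (-2 : ℝ) * (f x * (f x * g x)) + (-2 * β) * (f x * h₁ x)
          + (-2 * α ^ 2) * (g x * (g x * g x)) + (-2 * α ^ 2) * (f x * (g x * g₁ x))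
          + (-2 * α ^ 2 * β) * (g x * h₂ x) := by
      funext x
      rw [e1 x, e2 x, ← hf x, ← hg x, hg₁e, hh₁e, hh₂e]
      ring
    rw [heq]
    have I1 := schwartz_mul_int f (schwartz_mul_int f g.integrable)
    have I2 := schwartz_mul_int f h₁.integrable
    have I3 := schwartz_mul_int g (schwartz_mul_int g g.integrable)
    have I4 := schwartz_mul_int f (schwartz_mul_int g g₁.integrable)
    have I5 := schwartz_mul_int g h₂.integrable
    exact ((((I1.const_mul _).add (I2.const_mul _)).add (I3.const_mul _)).add
      (I4.const_mul _)).add (I5.const_mul _)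
  -- decay of F
  have htop : Tendsto F atTop (𝓝 0) := by
    have := (((schwartz_tendsto_top f).mul ((schwartz_tendsto_top g).pow 2)).const_mul
        (-α ^ 2)).sub
      (((schwartz_tendsto_top f).pow 3).const_mul ((2 - b * β) / 3)) |>.sub
      (((schwartz_tendsto_top f).mul (schwartz_tendsto_top h)).const_mul (2 * β))
    have h0 : (0:ℝ) = -α ^ 2 * ((0:ℝ) * (0:ℝ) ^ 2) - (2 - b * β) / 3 * (0:ℝ) ^ 3
        - 2 * β * ((0:ℝ) * (0:ℝ)) := by ring
    rw [hFdef, h0]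
    exact this
  have hbot : Tendsto F atBot (𝓝 0) := by
    have := (((schwartz_tendsto_bot f).mul ((schwartz_tendsto_bot g).pow 2)).const_mul
        (-α ^ 2)).sub
      (((schwartz_tendsto_bot f).pow 3).const_mul ((2 - b * β) / 3)) |>.sub
      (((schwartz_tendsto_bot f).mul (schwartz_tendsto_bot h)).const_mul (2 * β))
    have h0 : (0:ℝ) = -α ^ 2 * ((0:ℝ) * (0:ℝ) ^ 2) - (2 - b * β) / 3 * (0:ℝ) ^ 3
        - 2 * β * ((0:ℝ) * (0:ℝ)) := by ring
    rw [hFdef, h0]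
    exact this
  have hzero : (∫ x : ℝ, (2 * u t x * deriv (fun s => u s x) t
      + 2 * α ^ 2 * deriv (u t) x * deriv (fun s => deriv (u s) x) t)) = 0 := by
    have := integral_of_hasDerivAt_of_tendsto hFd hint hbot htop
    simpa using this
  have := hswap t
  rwa [hzero] at this
end

section
/- Monotone decay of the H¹_α norm with viscosity: under the same hypotheses with viscosity ν ≥ 0, i.e. u_t + u u_x − ν u_xx = −β τ_x, (1−α²∂ₓ²)τ = (b/2)u² + ((3−b)/2)α²u_x², and (3−b)β = 1, one has d/dt (1/2)∫(u² + α²u_x²) dx = −ν ∫ (u_x² + α² u_xx²) dx ≤ 0. -/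
open MeasureTheory SchwartzMap Filter

namespace BurgersAux

/-- Derivative of a Schwartz function, as a Schwartz function. -/
noncomputable def D (f : 𝓢(ℝ, ℝ)) : 𝓢(ℝ, ℝ) := SchwartzMap.derivCLM ℝ ℝ f

lemma D_apply (f : 𝓢(ℝ, ℝ)) (x : ℝ) : D f x = deriv f x := by
  simp [D, SchwartzMap.derivCLM_apply]

lemma sm_hasDerivAt (f : 𝓢(ℝ, ℝ)) (x : ℝ) :
    HasDerivAt f (D f x) x := by
  rw [D_apply]
  exact f.differentiableAt.hasDerivAt

lemma sm_bdd (f : 𝓢(ℝ, ℝ)) : ∃ C, ∀ x, ‖f x‖ ≤ C :=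
  ⟨‖f.toBoundedContinuousFunction‖, fun x => by
    simpa using f.toBoundedContinuousFunction.norm_coe_le_norm x⟩

lemma int2 (f g : 𝓢(ℝ, ℝ)) : Integrable (fun x => f x * g x) :=
  g.integrable.bdd_mul f.continuous.aestronglyMeasurable
    (Filter.Eventually.of_forall (sm_bdd f).choose_spec)

lemma int3 (f g h : 𝓢(ℝ, ℝ)) : Integrable (fun x => f x * g x * h x) := by
  have := (int2 g h).bdd_mul f.continuous.aestronglyMeasurable
    (Filter.Eventually.of_forall (sm_bdd f).choose_spec)
  simpa [mul_assoc] using this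

/-- Integration by parts for Schwartz functions on ℝ. -/
lemma schwartz_ibp (f g : 𝓢(ℝ, ℝ)) :
    ∫ x, f x * D g x = -∫ x, D f x * g x :=
  integral_mul_deriv_eq_deriv_mul_of_integrable
    (fun x _ => sm_hasDerivAt f x) (fun x _ => sm_hasDerivAt g x)
    (int2 f (D g)) (int2 (D f) g) (int2 f g)

/-- `∫ f² f' = 0` for Schwartz `f`. -/
lemma schwartz_cube (f : 𝓢(ℝ, ℝ)) :
    ∫ x, f x * f x * D f x = 0 := by
  have h1 : ∀ x, HasDerivAt (fun y => f y * f y) (D f x * f x + f x * D f x) x :=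
    fun x => (sm_hasDerivAt f x).mul (sm_hasDerivAt f x)
  have h2 := integral_mul_deriv_eq_deriv_mul_of_integrable (fun x _ => h1 x) (fun x _ => sm_hasDerivAt f x)
    (int3 f f (D f))
    (by
      apply ((int3 (D f) f f).add (int3 f (D f) f)).congr
      filter_upwards with x
      simp only [Pi.mul_apply, Pi.add_apply]
      ring)
    (int3 f f f)
  have hadd : (∫ x, (D f x * f x + f x * D f x) * f x)
      = (∫ x, f x * f x * D f x) + ∫ x, f x * f x * D f x := by
    rw [← integral_add (int3 f f (D f)) (int3 f f (D f))]
    congr 1; funext x; ring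
  rw [hadd] at h2
  linarith

/-- `∫ f f' f'' = -(1/2) ∫ f'³` for Schwartz `f`. -/
lemma schwartz_uvw (f : 𝓢(ℝ, ℝ)) :
    ∫ x, f x * D f x * D (D f) x
      = -(1/2) * ∫ x, D f x * D f x * D f x := by
  have h1 : ∀ x, HasDerivAt (fun y => D f y * D f y)
      (D (D f) x * D f x + D f x * D (D f) x) x :=
    fun x => (sm_hasDerivAt (D f) x).mul (sm_hasDerivAt (D f) x)
  have h2 := integral_mul_deriv_eq_deriv_mul_of_integrable (fun x _ => sm_hasDerivAt f x) (fun x _ => h1 x)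
    (by
      apply ((int3 f (D (D f)) (D f)).add (int3 f (D f) (D (D f)))).congr
      filter_upwards with x
      simp only [Pi.mul_apply, Pi.add_apply]
      ring)
    (by
      apply (int3 (D f) (D f) (D f)).congr
      filter_upwards with x
      simp only [Pi.mul_apply]
      ring)
    (by
      apply (int3 f (D f) (D f)).congr
      filter_upwards with x
      simp only [Pi.mul_apply]
      ring)
  have hadd : (∫ x, f x * (D (D f) x * D f x + D f x * D (D f) x))
      = (∫ x, f x * D f x * D (D f) x) + ∫ x, f x * D f x * D (D f) x := by
    rw [← integral_add (int3 f (D f) (D (D f))) (int3 f (D f) (D (D f)))]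
    congr 1; funext x; ring
  have hvv : (∫ x, D f x * (D f x * D f x)) = ∫ x, D f x * D f x * D f x := by
    congr 1; funext x; ring
  rw [hadd, hvv] at h2
  linarith

lemma pd1 {φ : ℝ × ℝ → ℝ} {Dφ : ℝ × ℝ →L[ℝ] ℝ} {a x : ℝ}
    (h : HasFDerivAt φ Dφ (a, x)) :
    HasDerivAt (fun s => φ (s, x)) (Dφ (1, 0)) a := by
  have h2 : HasDerivAt (fun s : ℝ => ((s, x) : ℝ × ℝ)) ((1 : ℝ), (0 : ℝ)) a :=
    (hasDerivAt_id a).prodMk (hasDerivAt_const a x)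
  exact h.comp_hasDerivAt a h2

lemma pd2 {φ : ℝ × ℝ → ℝ} {Dφ : ℝ × ℝ →L[ℝ] ℝ} {a x : ℝ}
    (h : HasFDerivAt φ Dφ (a, x)) :
    HasDerivAt (fun y => φ (a, y)) (Dφ (0, 1)) x := by
  have h2 : HasDerivAt (fun y : ℝ => ((a, y) : ℝ × ℝ)) ((0 : ℝ), (1 : ℝ)) x :=
    (hasDerivAt_const x a).prodMk (hasDerivAt_id x)
  exact h.comp_hasDerivAt x h2

lemma pd1' {φ : ℝ × ℝ → (ℝ × ℝ →L[ℝ] ℝ)} {Dφ : ℝ × ℝ →L[ℝ] (ℝ × ℝ →L[ℝ] ℝ)} {a x : ℝ}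
    (h : HasFDerivAt φ Dφ (a, x)) :
    HasDerivAt (fun s => φ (s, x)) (Dφ (1, 0)) a := by
  have h2 : HasDerivAt (fun s : ℝ => ((s, x) : ℝ × ℝ)) ((1 : ℝ), (0 : ℝ)) a :=
    (hasDerivAt_id a).prodMk (hasDerivAt_const a x)
  exact h.comp_hasDerivAt a h2

lemma pd2' {φ : ℝ × ℝ → (ℝ × ℝ →L[ℝ] ℝ)} {Dφ : ℝ × ℝ →L[ℝ] (ℝ × ℝ →L[ℝ] ℝ)} {a x : ℝ}
    (h : HasFDerivAt φ Dφ (a, x)) :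
    HasDerivAt (fun y => φ (a, y)) (Dφ (0, 1)) x := by
  have h2 : HasDerivAt (fun y : ℝ => ((a, y) : ℝ × ℝ)) ((0 : ℝ), (1 : ℝ)) x :=
    (hasDerivAt_const x a).prodMk (hasDerivAt_id x)
  exact h.comp_hasDerivAt x h2

/-- Clairaut's theorem for smooth functions of two real variables. -/
lemma mixed_partials (u : ℝ → ℝ → ℝ) (hu : ContDiff ℝ (⊤ : ℕ∞) (Function.uncurry u)) (t x : ℝ) :
    deriv (fun s => deriv (u s) x) t
      = deriv (fun y => deriv (fun s => u s y) t) x := by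
  set F := Function.uncurry u with hF
  have hdF : Differentiable ℝ F := hu.differentiable (by simp)
  have hF' : ContDiff ℝ (⊤ : ℕ∞) (fderiv ℝ F) := hu.fderiv_right (le_of_eq (by simp))
  have h2 : ∀ a y : ℝ, HasFDerivAt (fderiv ℝ F) (fderiv ℝ (fderiv ℝ F) (a, y)) (a, y) :=
    fun a y => ((hF'.differentiable (by simp)) (a, y)).hasFDerivAt
  have hx : ∀ s y : ℝ, deriv (u s) y = fderiv ℝ F (s, y) (0, 1) := by
    intro s y
    exact (pd2 (hdF (s, y)).hasFDerivAt).deriv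
  have ht : ∀ s y : ℝ, deriv (fun s' => u s' y) s = fderiv ℝ F (s, y) (1, 0) := by
    intro s y
    exact (pd1 (hdF (s, y)).hasFDerivAt).deriv
  have hL : deriv (fun s => deriv (u s) x) t
      = (fderiv ℝ (fderiv ℝ F) (t, x) (1, 0)) (0, 1) := by
    have e : (fun s => deriv (u s) x) = fun s => fderiv ℝ F (s, x) (0, 1) :=
      funext fun s => hx s x
    rw [e]
    have h3 : HasDerivAt (fun s => fderiv ℝ F (s, x)) (fderiv ℝ (fderiv ℝ F) (t, x) (1, 0)) t :=
      pd1' (h2 t x)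
    have h4 := h3.clm_apply (hasDerivAt_const t ((0 : ℝ), (1 : ℝ)))
    simpa using h4.deriv
  have hR : deriv (fun y => deriv (fun s => u s y) t) x
      = (fderiv ℝ (fderiv ℝ F) (t, x) (0, 1)) (1, 0) := by
    have e : (fun y => deriv (fun s => u s y) t) = fun y => fderiv ℝ F (t, y) (1, 0) :=
      funext fun y => ht t y
    rw [e]
    have h3 : HasDerivAt (fun y => fderiv ℝ F (t, y)) (fderiv ℝ (fderiv ℝ F) (t, x) (0, 1)) x :=
      pd2' (h2 t x)
    have h4 := h3.clm_apply (hasDerivAt_const x ((1 : ℝ), (0 : ℝ)))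
    simpa using h4.deriv
  rw [hL, hR]
  exact second_derivative_symmetric (fun y => (hdF y).hasFDerivAt) (h2 t x) _ _

/-- The key integral computation. -/
lemma key_integral (α b β ν : ℝ) (hbβ : (3 - b) * β = 1) (U T : 𝓢(ℝ, ℝ)) (p q : ℝ → ℝ)
    (hp : ∀ x, p x = ν * D (D U) x - U x * D U x - β * D T x)
    (hq : ∀ x, q x = ν * D (D (D U)) x - (D U x * D U x + U x * D (D U) x) - β * D (D T) x)
    (hh : ∀ x, T x - α ^ 2 * D (D T) x
      = (b / 2) * (U x) ^ 2 + ((3 - b) / 2) * α ^ 2 * (D U x) ^ 2) :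
    (1 / 2) * ∫ x, (2 * U x * p x + 2 * α ^ 2 * D U x * q x)
      = -ν * ∫ x, ((D U x) ^ 2 + α ^ 2 * (D (D U) x) ^ 2) := by
  have hfun : (fun x => 2 * U x * p x + 2 * α ^ 2 * D U x * q x)
      = fun x =>
        (2 * ν) * (U x * D (D U) x)
        + ((β * b - 2) * (U x * U x * D U x)
        + ((-(2 * β)) * (U x * D T x)
        + ((2 * α ^ 2 * ν) * (D U x * D (D (D U)) x)
        + ((-(α ^ 2)) * (D U x * D U x * D U x)
        + ((-(2 * α ^ 2)) * (U x * D U x * D (D U) x)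
        + (-(2 * β)) * (D U x * T x)))))) := by
    funext x
    rw [hp x, hq x]
    linear_combination (2 * β * D U x) * hh x + α ^ 2 * (D U x) ^ 3 * hbβ
  rw [hfun]
  have i1 := (int2 U (D (D U))).const_mul (2 * ν)
  have i2 := (int3 U U (D U)).const_mul (β * b - 2)
  have i3 := (int2 U (D T)).const_mul (-(2 * β))
  have i4 := (int2 (D U) (D (D (D U)))).const_mul (2 * α ^ 2 * ν)
  have i5 := (int3 (D U) (D U) (D U)).const_mul (-(α ^ 2))
  have i6 := (int3 U (D U) (D (D U))).const_mul (-(2 * α ^ 2))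
  have i7 := (int2 (D U) T).const_mul (-(2 * β))
  have s67 : Integrable (fun x =>
      (-(2 * α ^ 2)) * (U x * D U x * D (D U) x) + (-(2 * β)) * (D U x * T x)) := by
    exact i6.add i7
  have s567 : Integrable (fun x =>
      (-(α ^ 2)) * (D U x * D U x * D U x)
      + ((-(2 * α ^ 2)) * (U x * D U x * D (D U) x) + (-(2 * β)) * (D U x * T x))) := by
    exact i5.add s67
  have s4567 : Integrable (fun x =>
      (2 * α ^ 2 * ν) * (D U x * D (D (D U)) x)
      + ((-(α ^ 2)) * (D U x * D U x * D U x)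
      + ((-(2 * α ^ 2)) * (U x * D U x * D (D U) x) + (-(2 * β)) * (D U x * T x)))) := by
    exact i4.add s567
  have s34567 : Integrable (fun x =>
      (-(2 * β)) * (U x * D T x)
      + ((2 * α ^ 2 * ν) * (D U x * D (D (D U)) x)
      + ((-(α ^ 2)) * (D U x * D U x * D U x)
      + ((-(2 * α ^ 2)) * (U x * D U x * D (D U) x) + (-(2 * β)) * (D U x * T x))))) := by
    exact i3.add s4567
  have s234567 : Integrable (fun x =>
      (β * b - 2) * (U x * U x * D U x)
      + ((-(2 * β)) * (U x * D T x)
      + ((2 * α ^ 2 * ν) * (D U x * D (D (D U)) x)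
      + ((-(α ^ 2)) * (D U x * D U x * D U x)
      + ((-(2 * α ^ 2)) * (U x * D U x * D (D U) x) + (-(2 * β)) * (D U x * T x)))))) := by
    exact i2.add s34567
  rw [integral_add i1 s234567, integral_add i2 s34567, integral_add i3 s4567,
    integral_add i4 s567, integral_add i5 s67, integral_add i6 i7]
  simp only [integral_const_mul]
  rw [schwartz_ibp U (D U), schwartz_ibp U T, schwartz_ibp (D U) (D (D U)),
    schwartz_cube U, schwartz_uvw U]
  have eR : (fun x => (D U x) ^ 2 + α ^ 2 * (D (D U) x) ^ 2)
      = fun x => D U x * D U x + α ^ 2 * (D (D U) x * D (D U) x) := by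
    funext x; ring
  rw [eR, integral_add (int2 (D U) (D U)) ((int2 (D (D U)) (D (D U))).const_mul _),
    integral_const_mul]
  ring

end BurgersAux
open BurgersAux MeasureTheory in
/-- Monotone decay of the `H¹_α` norm with viscosity `ν ≥ 0` when `(3-b)β = 1`:
`d/dt (1/2)∫(u² + α²u_x²) dx = -ν ∫ (u_x² + α²u_xx²) dx ≤ 0`. -/
theorem burgers_alpha_beta_H1_decay
    (α b β ν : ℝ) (hα : 0 < α) (hν : 0 ≤ ν) (hbβ : (3 - b) * β = 1)
    (u τ : ℝ → ℝ → ℝ)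
    (hu : ContDiff ℝ (⊤ : ℕ∞) (Function.uncurry u))
    (hτ : ContDiff ℝ (⊤ : ℕ∞) (Function.uncurry τ))
    (hu_decay : ∀ t : ℝ, ∃ f : SchwartzMap ℝ ℝ, ∀ x, f x = u t x)
    (hux_decay : ∀ t : ℝ, ∃ f : SchwartzMap ℝ ℝ, ∀ x, f x = deriv (u t) x)
    (huxx_decay : ∀ t : ℝ, ∃ f : SchwartzMap ℝ ℝ, ∀ x, f x = iteratedDeriv 2 (u t) x)
    (hτ_decay : ∀ t : ℝ, ∃ f : SchwartzMap ℝ ℝ, ∀ x, f x = τ t x)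
    (hpde : ∀ t x, deriv (fun s => u s x) t + u t x * deriv (u t) x
      - ν * iteratedDeriv 2 (u t) x + β * deriv (τ t) x = 0)
    (hhelm : ∀ t x, τ t x - α ^ 2 * iteratedDeriv 2 (τ t) x
      = (b / 2) * (u t x) ^ 2 + ((3 - b) / 2) * α ^ 2 * (deriv (u t) x) ^ 2)
    (hswap : ∀ t, HasDerivAt
      (fun s => (1 / 2) * ∫ x : ℝ, ((u s x) ^ 2 + α ^ 2 * (deriv (u s) x) ^ 2))
      ((1 / 2) * ∫ x : ℝ, (2 * u t x * deriv (fun s => u s x) t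
        + 2 * α ^ 2 * deriv (u t) x * deriv (fun s => deriv (u s) x) t)) t) :
    ∀ t, HasDerivAt
      (fun s => (1 / 2) * ∫ x : ℝ, ((u s x) ^ 2 + α ^ 2 * (deriv (u s) x) ^ 2))
      (-ν * ∫ x : ℝ, ((deriv (u t) x) ^ 2 + α ^ 2 * (iteratedDeriv 2 (u t) x) ^ 2)) t ∧
    -ν * ∫ x : ℝ, ((deriv (u t) x) ^ 2 + α ^ 2 * (iteratedDeriv 2 (u t) x) ^ 2) ≤ 0 := by
  intro t
  obtain ⟨U, hU⟩ := hu_decay t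
  obtain ⟨T, hT⟩ := hτ_decay t
  have hUe : u t = ⇑U := funext fun x => (hU x).symm
  have hTe : τ t = ⇑T := funext fun x => (hT x).symm
  have hVe : deriv (u t) = ⇑(D U) := by
    funext x
    rw [hUe]
    exact (D_apply U x).symm
  have hWe : iteratedDeriv 2 (u t) = ⇑(D (D U)) := by
    have h2 : iteratedDeriv 2 (u t) = deriv (deriv (u t)) := by
      rw [show (2 : ℕ) = 1 + 1 from rfl, iteratedDeriv_succ, iteratedDeriv_one]
    funext x
    rw [h2, hVe]
    exact (D_apply (D U) x).symm
  have hT1e : deriv (τ t) = ⇑(D T) := by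
    funext x
    rw [hTe]
    exact (D_apply T x).symm
  have hT2e : iteratedDeriv 2 (τ t) = ⇑(D (D T)) := by
    have h2 : iteratedDeriv 2 (τ t) = deriv (deriv (τ t)) := by
      rw [show (2 : ℕ) = 1 + 1 from rfl, iteratedDeriv_succ, iteratedDeriv_one]
    funext x
    rw [h2, hT1e]
    exact (D_apply (D T) x).symm
  -- pointwise time derivative of u from the PDE
  have hut : ∀ x, deriv (fun s => u s x) t
      = ν * D (D U) x - U x * D U x - β * D T x := by
    intro x
    have h := hpde t x
    rw [hVe, hWe, hT1e, hUe] at h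
    linarith
  -- pointwise mixed derivative via Clairaut
  have hvt : ∀ x, deriv (fun s => deriv (u s) x) t
      = ν * D (D (D U)) x - (D U x * D U x + U x * D (D U) x) - β * D (D T) x := by
    intro x
    rw [mixed_partials u hu t x]
    have e : (fun y => deriv (fun s => u s y) t)
        = fun y => ν * D (D U) y - U y * D U y - β * D T y :=
      funext fun y => hut y
    rw [e]
    have h : HasDerivAt (fun y => ν * D (D U) y - U y * D U y - β * D T y)
        (ν * D (D (D U)) x - (D U x * D U x + U x * D (D U) x) - β * D (D T) x) x :=
      (((sm_hasDerivAt (D (D U)) x).const_mul ν).sub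
        ((sm_hasDerivAt U x).mul (sm_hasDerivAt (D U) x))).sub
        ((sm_hasDerivAt (D T) x).const_mul β)
    exact h.deriv
  -- Helmholtz relation in Schwartz form
  have hh : ∀ x, T x - α ^ 2 * D (D T) x
      = (b / 2) * (U x) ^ 2 + ((3 - b) / 2) * α ^ 2 * (D U x) ^ 2 := by
    intro x
    have h := hhelm t x
    rw [hT2e, hVe, hTe, hUe] at h
    exact h
  have key := key_integral α b β ν hbβ U T
    (fun x => deriv (fun s => u s x) t)
    (fun x => deriv (fun s => deriv (u s) x) t) hut hvt hh
  have hUe' : ∀ x, u t x = U x := fun x => (hU x).symm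
  have hVe' : ∀ x, deriv (u t) x = D U x := fun x => by rw [hVe]
  have hWe' : ∀ x, iteratedDeriv 2 (u t) x = D (D U) x := fun x => by rw [hWe]
  have e1 : (1 / 2 : ℝ) * ∫ x : ℝ, (2 * u t x * deriv (fun s => u s x) t
        + 2 * α ^ 2 * deriv (u t) x * deriv (fun s => deriv (u s) x) t)
      = -ν * ∫ x : ℝ, ((deriv (u t) x) ^ 2 + α ^ 2 * (iteratedDeriv 2 (u t) x) ^ 2) := by
    simp only [hUe', hVe', hWe']
    exact key
  constructor
  · have h := hswap t
    rw [e1] at h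
    exact h
  · have hI : 0 ≤ ∫ x : ℝ, ((deriv (u t) x) ^ 2 + α ^ 2 * (iteratedDeriv 2 (u t) x) ^ 2) :=
      integral_nonneg fun x => by positivity
    have := mul_nonneg hν hI
    linarith
end

section
/- Traveling-wave second integral for Burgers-αβ with (3−b)β = 1 and ν = 0: if u(z) solves (u−c)u' + βτ' = 0 and τ − α²τ'' = (b/2)u² + ((3−b)/2)α²(u')², then along solutions the quantity 2Ku + cu² − βu³ + α²(u−c)(u')² is constant, where K is the first integral, i.e. the constant value of u²/2 − cu + βτ. -/
/-- Traveling-wave second integral for the inviscid Burgers-αβ equation with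
`(3-b)β = 1`: along solutions of `(u-c)u' + βτ' = 0`,
`τ - α²τ'' = (b/2)u² + ((3-b)/2)α²(u')²`, the quantity
`2Ku + cu² - βu³ + α²(u-c)(u')²` is constant, where `K = u²/2 - cu + βτ`. -/
theorem burgers_alpha_beta_second_integral
    (α b β c K : ℝ) (hα : 0 < α) (hbβ : (3 - b) * β = 1)
    (u τ : ℝ → ℝ)
    (hu : ContDiff ℝ (⊤ : ℕ∞) u) (hτ : ContDiff ℝ (⊤ : ℕ∞) τ)
    (h1 : ∀ z, (u z - c) * deriv u z + β * deriv τ z = 0)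
    (h2 : ∀ z, τ z - α ^ 2 * iteratedDeriv 2 τ z
      = (b / 2) * (u z) ^ 2 + ((3 - b) / 2) * α ^ 2 * (deriv u z) ^ 2)
    (hK : ∀ z, (u z) ^ 2 / 2 - c * u z + β * τ z = K) :
    ∀ z, deriv (fun z => 2 * K * u z + c * (u z) ^ 2 - β * (u z) ^ 3
      + α ^ 2 * (u z - c) * (deriv u z) ^ 2) z = 0 := by
  intro z
  have hu' := (contDiff_infty_iff_deriv.mp (hu.of_le (by simp))).2
  have hτ' := (contDiff_infty_iff_deriv.mp (hτ.of_le (by simp))).2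
  have hud : ∀ x, HasDerivAt u (deriv u x) x :=
    fun x => ((hu.differentiable (by simp)) x).hasDerivAt
  have hu'd : ∀ x, HasDerivAt (deriv u) (deriv (deriv u) x) x :=
    fun x => ((hu'.differentiable (by simp)) x).hasDerivAt
  have hτd : ∀ x, HasDerivAt τ (deriv τ x) x :=
    fun x => ((hτ.differentiable (by simp)) x).hasDerivAt
  have hτ'd : ∀ x, HasDerivAt (deriv τ) (deriv (deriv τ) x) x :=
    fun x => ((hτ'.differentiable (by simp)) x).hasDerivAt
  set U := u z
  set U1 := deriv u z
  set U2 := deriv (deriv u) z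
  set T2 := deriv (deriv τ) z
  -- differentiate h1
  have hg : HasDerivAt (fun x => (u x - c) * deriv u x + β * deriv τ x)
      ((U1 * U1 + (U - c) * U2) + β * T2) z := by
    exact (((hud z).sub_const c).mul (hu'd z)).add ((hτ'd z).const_mul β)
  have h1' : U1 * U1 + (U - c) * U2 + β * T2 = 0 := by
    have heq : (fun x => (u x - c) * deriv u x + β * deriv τ x) = fun _ => 0 := by
      funext x; exact h1 x
    have := hg.deriv
    rw [heq, deriv_const] at this
    linarith [this]
  -- derivative of the big expression
  have hF : HasDerivAt (fun x => 2 * K * u x + c * (u x) ^ 2 - β * (u x) ^ 3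
      + α ^ 2 * (u x - c) * (deriv u x) ^ 2)
      ((2 * K * U1 + c * (2 * U ^ 1 * U1) - β * (3 * U ^ 2 * U1))
        + (α ^ 2 * U1 * U1 ^ 2 + α ^ 2 * (U - c) * (2 * U1 ^ 1 * U2))) z := by
    exact ((((hud z).const_mul (2 * K)).add (((hud z).pow 2).const_mul c)).sub
        (((hud z).pow 3).const_mul β)).add
      ((((hud z).sub_const c).const_mul (α ^ 2)).mul ((hu'd z).pow 2))
  rw [hF.deriv]
  have h2z := h2 z
  rw [iteratedDeriv_succ, iteratedDeriv_one] at h2z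
  have hKz := hK z
  linear_combination (-2*U1)*hKz + (2*α^2*U1)*h1' + (2*β*U1)*h2z + (α^2*U1^3 - U^2*U1)*hbβ
end
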